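/- In $\mathbb{C}^4$, for $f = (x^3 + y^2 + zw,\; xy + z^2 + w^2)$, the vector field $X$ with components $X_1 = 768xzw - 192xw^2 + 4x^2 - 4xy - 16zw + 4w^2$, $X_2 = 24xzw + 1152yzw - 96xw^2 - 288yw^2 + 8xy - 6y^2 - 2z^2 + 2w^2$, $X_3 = -12x^2w + 960z^2w - 288zw^2 - 192w^3 + xy + 7xz - 5yz + z^2 + w^2$, $X_4 = 48x^2w - 48xyw + 1152zw^2 - 288w^3 - xy + 8yz - z^2 + 5xw - 7yw - w^2$ satisfies $\varphi \cdot X = c \cdot f$, where $\varphi = \begin{pmatrix} 3x^2 & 2y & w & z \\ y & x & 2z & 2w \end{pmatrix}$ is the Jacobian of $f$ and $c = \begin{pmatrix} 2304zw - 576w^2 + 12x - 12y & -192w^2 + 4y - z + w \\ 0 & 1920zw - 576w^2 + 12x - 10y + 2z - 2w \end{pmatrix}$. -/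
import Mathlib


open MvPolynomial

namespace Stmt19

noncomputable abbrev x : MvPolynomial (Fin 4) ℂ := X 0
noncomputable abbrev y : MvPolynomial (Fin 4) ℂ := X 1
noncomputable abbrev z : MvPolynomial (Fin 4) ℂ := X 2
noncomputable abbrev w : MvPolynomial (Fin 4) ℂ := X 3

/-- `f = (x³ + y² + zw, xy + z² + w²)ᵗ`. -/
noncomputable def f : Matrix (Fin 2) (Fin 1) (MvPolynomial (Fin 4) ℂ) :=
  !![x ^ 3 + y ^ 2 + z * w;
     x * y + z ^ 2 + w ^ 2]

/-- The components of the vector field `X`. -/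
noncomputable def Xf : Matrix (Fin 4) (Fin 1) (MvPolynomial (Fin 4) ℂ) :=
  !![768 * (x * z * w) - 192 * (x * w ^ 2) + 4 * x ^ 2 - 4 * (x * y)
       - 16 * (z * w) + 4 * w ^ 2;
     24 * (x * z * w) + 1152 * (y * z * w) - 96 * (x * w ^ 2)
       - 288 * (y * w ^ 2) + 8 * (x * y) - 6 * y ^ 2 - 2 * z ^ 2 + 2 * w ^ 2;
     -(12 * (x ^ 2 * w)) + 960 * (z ^ 2 * w) - 288 * (z * w ^ 2)
       - 192 * w ^ 3 + x * y + 7 * (x * z) - 5 * (y * z) + z ^ 2 + w ^ 2;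
     48 * (x ^ 2 * w) - 48 * (x * y * w) + 1152 * (z * w ^ 2) - 288 * w ^ 3
       - x * y + 8 * (y * z) - z ^ 2 + 5 * (x * w) - 7 * (y * w) - w ^ 2]

/-- The Jacobian matrix `φ` of `f`. -/
noncomputable def φ : Matrix (Fin 2) (Fin 4) (MvPolynomial (Fin 4) ℂ) :=
  !![3 * x ^ 2, 2 * y, w, z;
     y, x, 2 * z, 2 * w]

/-- The matrix `c`. -/
noncomputable def c : Matrix (Fin 2) (Fin 2) (MvPolynomial (Fin 4) ℂ) :=
  !![2304 * (z * w) - 576 * w ^ 2 + 12 * x - 12 * y,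
       -(192 * w ^ 2) + 4 * y - z + w;
     0, 1920 * (z * w) - 576 * w ^ 2 + 12 * x - 10 * y + 2 * z - 2 * w]

/-- `φ` is the Jacobian matrix of `f`, and the vector field `X` satisfies the
tangency relation `φ ⬝ X = c ⬝ f`, witnessing tangency of `X` to the complete
intersection surface `{f₁ = f₂ = 0} ⊂ ℂ⁴`. -/
theorem stmt_19 :
    (∀ i j, φ i j = pderiv j (f i 0)) ∧ φ * Xf = c * f := by
  constructor
  · intro i j
    fin_cases i <;> fin_cases j <;>
      simp [φ, f, x, y, z, w, pderiv_X] <;> ring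
  · rw [← Matrix.ext_iff]; intro i j
    fin_cases i <;> fin_cases j <;>
      · simp [Matrix.mul_apply, Fin.sum_univ_succ, φ, Xf, c, f]
        ring

end Stmt19
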